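/- Trace formula for K: with K_{m+1} := Jᵀ Q_{m+1} J as in the linear-detrending setting (Q_{m+1} the complement of projection onto constants and linear functions on {1,…,m+1}, J the lower-triangular all-ones matrix), one has trace(K_{m+1}) = (m² + 2m − 3)/15. -/

import Mathlib

/-!
With `G = DᵀD` and `W = JᵀD`, cyclicity of the trace gives
`tr K = tr (JᵀJ) - tr (G⁻¹ WᵀW)`. Counting rows from `0`, row `r` of `W` is the suffix sum
`∑_{a ≥ r} (1, a + 1) = (N - r, T_N - T_r)`, where `N = m + 1` and `T_k = k (k + 1) / 2`;
also `tr (JᵀJ) = T_N`. So the entries of both `2 × 2` Gram matrices are power sums, polynomial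
in `N`, and the resulting rational function of `N` simplifies to `(N² - 4) / 15`.
-/

open Matrix

/-- The lower-triangular matrix of ones, `J_{r,s} = 1` iff `s ≤ r` (indices `1,…,m+1`). -/
def Jones (m : ℕ) : Matrix (Fin (m + 1)) (Fin (m + 1)) ℝ :=
  fun r s => if s ≤ r then 1 else 0

/-- The `(m+1) × 2` design matrix with rows `(1, t)` for `t = 1, …, m+1`. -/
def linDesign (m : ℕ) : Matrix (Fin (m + 1)) (Fin 2) ℝ :=
  fun t j => ((t : ℝ) + 1) ^ (j : ℕ)

/-- `Q_{m+1} = I − D(DᵀD)⁻¹Dᵀ` for the linear-fit design matrix. -/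
noncomputable def Qlin (m : ℕ) : Matrix (Fin (m + 1)) (Fin (m + 1)) ℝ :=
  1 - linDesign m * ((linDesign m)ᵀ * linDesign m)⁻¹ * (linDesign m)ᵀ

/-- `K_{m+1} := Jᵀ Q_{m+1} J`. -/
noncomputable def Kmat (m : ℕ) : Matrix (Fin (m + 1)) (Fin (m + 1)) ℝ :=
  (Jones m)ᵀ * Qlin m * Jones m

open Finset

namespace Matrix

variable {n k R : Type*} [Fintype n] [Fintype k] [DecidableEq n] [CommRing R]

theorem trace_transpose_mul_one_sub_mul (J : Matrix n n R) (D : Matrix n k R) (M : Matrix k k R) :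
    (Jᵀ * (1 - D * M * Dᵀ) * J).trace
      = (Jᵀ * J).trace - (M * ((Jᵀ * D)ᵀ * (Jᵀ * D))).trace := by
  rw [Matrix.mul_sub, Matrix.sub_mul, Matrix.mul_one, trace_sub, transpose_mul,
    transpose_transpose]
  simp only [Matrix.mul_assoc]
  rw [trace_mul_cycle']
  simp only [Matrix.mul_assoc]

/-- No invertibility hypothesis is needed: for a singular matrix both sides are `0`. -/
theorem trace_inv_mul_fin_two {K : Type*} [Field K] (a b c d p q r s : K) :
    (!![a, b; c, d]⁻¹ * !![p, q; r, s]).trace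
      = (d * p - b * r - c * q + a * s) / (a * d - b * c) := by
  rw [inv_def, adjugate_fin_two_of, det_fin_two_of, Ring.inverse_eq_inv, smul_mul, trace_smul,
    smul_eq_mul, trace_fin_two]
  simp only [mul_apply, Fin.sum_univ_two, of_apply, cons_val', cons_val_zero, cons_val_one,
    cons_val_fin_one]
  ring

end Matrix

theorem Fin.sum_univ_ite_le {M : Type*} [AddCommGroup M] {n : ℕ} (f : ℕ → M) (r : Fin n) :
    ∑ a : Fin n, (if r ≤ a then f a else 0)
      = ∑ a ∈ range n, f a - ∑ a ∈ range r, f a := by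
  rw [← sum_Ico_eq_sub f r.is_le']
  simp only [Fin.le_def]
  rw [Fin.sum_univ_eq_sum_range (fun a => if (r : ℕ) ≤ a then f a else 0), ← sum_filter]
  congr 1
  ext a
  simp only [mem_filter, mem_range, mem_Ico]
  omega

section PowerSums

variable (n : ℕ) (x y : ℝ)

theorem sum_range_cast_add_one : ∑ a ∈ range n, ((a : ℝ) + 1) = n * (n + 1) / 2 := by
  induction n with
  | zero => simp
  | succ n ih => rw [sum_range_succ, ih]; push_cast; ring

theorem sum_range_cast_add_one_sq :
    ∑ a ∈ range n, ((a : ℝ) + 1) ^ 2 = (n : ℝ) * (n + 1) * (2 * n + 1) / 6 := by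
  induction n with
  | zero => simp
  | succ n ih => rw [sum_range_succ, ih]; push_cast; ring

theorem Fin.sum_univ_sub_val : ∑ r : Fin n, (x - r) = n * x - n * (n - 1) / 2 := by
  induction n with
  | zero => simp
  | succ n ih =>
    rw [Fin.sum_univ_castSucc]
    simp only [Fin.val_castSucc, Fin.val_last, ih]
    push_cast; ring

theorem Fin.sum_univ_sub_val_sq :
    ∑ r : Fin n, (x - r) ^ 2 = n * x ^ 2 - n * (n - 1) * x + n * (n - 1) * (2 * n - 1) / 6 := by
  induction n with
  | zero => simp
  | succ n ih =>
    rw [Fin.sum_univ_castSucc]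
    simp only [Fin.val_castSucc, Fin.val_last, ih]
    push_cast; ring

theorem Fin.sum_univ_sub_val_mul_sub_triangular :
    ∑ r : Fin n, (x - r) * (y - r * (r + 1) / 2)
      = n * x * y - n * (n - 1) / 2 * y - (n - 1) * n * (n + 1) / 6 * x
        + (n - 1) * n * (n + 1) * (3 * n - 2) / 24 := by
  induction n with
  | zero => simp
  | succ n ih =>
    rw [Fin.sum_univ_castSucc]
    simp only [Fin.val_castSucc, Fin.val_last, ih]
    push_cast; ring

theorem Fin.sum_univ_sub_triangular_sq :
    ∑ r : Fin n, (y - r * (r + 1) / 2) ^ 2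
      = n * y ^ 2 - (n - 1) * n * (n + 1) / 3 * y
        + (n - 1) * n * (n + 1) * (3 * n ^ 2 - 2) / 60 := by
  induction n with
  | zero => simp
  | succ n ih =>
    rw [Fin.sum_univ_castSucc]
    simp only [Fin.val_castSucc, Fin.val_last, ih]
    push_cast; ring

end PowerSums

section Detrending

variable (m : ℕ)

theorem transpose_Jones_mul_linDesign_apply (r : Fin (m + 1)) (j : Fin 2) :
    ((Jones m)ᵀ * linDesign m) r j
      = ∑ a ∈ range (m + 1), ((a : ℝ) + 1) ^ (j : ℕ)
        - ∑ a ∈ range r, ((a : ℝ) + 1) ^ (j : ℕ) := by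
  rw [← Fin.sum_univ_ite_le]
  simp [mul_apply, Jones, linDesign]

theorem transpose_Jones_mul_linDesign_apply_zero (r : Fin (m + 1)) :
    ((Jones m)ᵀ * linDesign m) r 0 = m + 1 - r := by
  simp [transpose_Jones_mul_linDesign_apply]

theorem transpose_Jones_mul_linDesign_apply_one (r : Fin (m + 1)) :
    ((Jones m)ᵀ * linDesign m) r 1 = (m + 1) * (m + 2) / 2 - r * (r + 1) / 2 := by
  rw [transpose_Jones_mul_linDesign_apply]
  simp only [Fin.val_one, pow_one, sum_range_cast_add_one]
  push_cast
  ring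

theorem trace_transpose_Jones_mul_self :
    ((Jones m)ᵀ * Jones m).trace = (m + 1) * (m + 2) / 2 := by
  have hdiag (r : Fin (m + 1)) :
      ((Jones m)ᵀ * Jones m) r r = ((Jones m)ᵀ * linDesign m) r 0 := by
    simp only [mul_apply, transpose_apply, Jones, linDesign]
    congr 1 with a
    split_ifs <;> simp
  simp only [trace, diag_apply, hdiag, transpose_Jones_mul_linDesign_apply_zero,
    Fin.sum_univ_sub_val]
  push_cast
  ring

theorem linDesign_gram :
    (linDesign m)ᵀ * linDesign m
      = !![(m : ℝ) + 1, (m + 1) * (m + 2) / 2;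
          (m + 1) * (m + 2) / 2, (m + 1) * (m + 2) * (2 * m + 3) / 6] := by
  ext i j
  simp only [mul_apply, transpose_apply, linDesign]
  rw [Fin.sum_univ_eq_sum_range
    (fun t => ((t : ℝ) + 1) ^ (i : ℕ) * ((t : ℝ) + 1) ^ (j : ℕ))]
  fin_cases i <;> fin_cases j <;>
    simp only [Fin.zero_eta, Fin.mk_one, pow_zero, pow_one, one_mul, mul_one, ← sq, sum_const,
      card_range, nsmul_eq_mul, sum_range_cast_add_one, sum_range_cast_add_one_sq, of_apply,
      cons_val', cons_val_zero, cons_val_one, cons_val_fin_one]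
  all_goals push_cast; ring

theorem transpose_Jones_mul_linDesign_gram :
    ((Jones m)ᵀ * linDesign m)ᵀ * ((Jones m)ᵀ * linDesign m)
      = !![((m : ℝ) + 1) * (m + 2) * (2 * m + 3) / 6,
            ((m : ℝ) + 1) * (m + 2) * (5 * (m + 1) ^ 2 + 5 * (m + 1) + 2) / 24;
          ((m : ℝ) + 1) * (m + 2) * (5 * (m + 1) ^ 2 + 5 * (m + 1) + 2) / 24,
            ((m : ℝ) + 1) * (m + 2)
              * (4 * (m + 1) ^ 3 + 6 * (m + 1) ^ 2 + 4 * (m + 1) + 1) / 30] := by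
  ext i j
  rw [mul_apply]
  fin_cases i <;> fin_cases j <;>
    simp only [Fin.zero_eta, Fin.mk_one, transpose_apply, transpose_Jones_mul_linDesign_apply_zero,
      transpose_Jones_mul_linDesign_apply_one, mul_comm _ ((m : ℝ) + 1 - _), ← sq,
      Fin.sum_univ_sub_val_sq, Fin.sum_univ_sub_val_mul_sub_triangular,
      Fin.sum_univ_sub_triangular_sq, of_apply, cons_val', cons_val_zero, cons_val_one,
      cons_val_fin_one]
  all_goals push_cast; ring

end Detrending

theorem trace_Kmat (m : ℕ) (hm : 1 ≤ m) :
    (Kmat m).trace = ((m : ℝ) ^ 2 + 2 * m - 3) / 15 := by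
  rw [Kmat, Qlin, trace_transpose_mul_one_sub_mul, trace_transpose_Jones_mul_self, linDesign_gram,
    transpose_Jones_mul_linDesign_gram, trace_inv_mul_fin_two]
  have hdet : ((m : ℝ) + 1) * ((m + 1) * (m + 2) * (2 * m + 3) / 6)
      - (m + 1) * (m + 2) / 2 * ((m + 1) * (m + 2) / 2) = (m + 1) ^ 2 * (m + 2) * m / 12 := by
    ring
  have hm0 : (m : ℝ) ≠ 0 := Nat.cast_ne_zero.mpr (by omega)
  rw [hdet]
  field_simp
  ring
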